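/- Let n be a natural number with prime factorisation n = p_1^{α_1} ⋯ p_t^{α_t} (the p_i distinct primes). Then every skew brace of order n is one-generator if and only if α_i = 1 for every i and p_i does not divide p_j − 1 for all i ≠ j. -/

import Mathlib

/-- A skew (left) brace: a set with two group structures `(A,+)` and `(A,∘)`
(the latter written multiplicatively) satisfying
`a ∘ (b + c) = a ∘ b - a + a ∘ c`. -/
class SkewBrace (A : Type*) extends AddGroup A, Group A where
  skew_left_distrib : ∀ a b c : A, a * (b + c) = a * b - a + a * c

/-- A sub-skew brace: a subset that is a subgroup of both `(A,+)` and `(A,∘)`. -/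
def IsSubSkewBrace {A : Type*} [SkewBrace A] (S : Set A) : Prop :=
  (0 : A) ∈ S ∧ (∀ x ∈ S, ∀ y ∈ S, x + y ∈ S) ∧ (∀ x ∈ S, -x ∈ S) ∧
    (1 : A) ∈ S ∧ (∀ x ∈ S, ∀ y ∈ S, x * y ∈ S) ∧ (∀ x ∈ S, x⁻¹ ∈ S)

/-- A skew brace is one-generator if there is an element `a` such that the
smallest sub-skew brace containing `a` is the whole of `A`, i.e. every
sub-skew brace containing `a` is all of `A`. -/
def IsOneGenerator (A : Type*) [SkewBrace A] : Prop :=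
  ∃ a : A, ∀ S : Set A, IsSubSkewBrace S → a ∈ S → S = Set.univ


/-!
The two arithmetic conditions together say that `n` is coprime to `φ n`, and these are exactly
the `n` for which every group of order `n` is cyclic (Szele). This in turn is equivalent to every
skew brace of order `n` being one-generator: a skew brace with cyclic additive group is generated
by an additive generator, while the trivial skew brace `a ∘ b = a + b` on a non-cyclic group is
not, since the cyclic subgroup generated by any element is a sub-skew brace.

If `n` is coprime to `φ n`, it is squarefree, so a group of order `n` is a Z-group, hence a
semidirect product `N ⋊ H` of cyclic groups of coprime order; the action `H → Aut N` is trivial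
since its image has order dividing both `|H|` and `φ |N|`. Conversely a prime `p` dividing `n` and
`φ n` gives either `p² ∣ n`, realised by `C_p × C_p`, or a prime `q ∣ n` with `p ∣ q - 1`,
realised by the non-abelian `C_q ⋊ C_p`; a cyclic factor then brings the order up to `n`.
-/

namespace Nat

theorem Prime.dvd_totient_iff {p n : ℕ} (hp : p.Prime) (hn : n ≠ 0) :
    p ∣ φ n ↔ p ^ 2 ∣ n ∨ ∃ q ∈ n.primeFactors, p ∣ q - 1 := by
  refine ⟨fun h ↦ ?_, ?_⟩
  · rw [totient_eq_prod_factorization hn, Finsupp.prod, support_factorization] at h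
    obtain ⟨q, hq, hpq⟩ := (Prime.dvd_finsetProd_iff hp.prime _).mp h
    rcases hp.dvd_mul.mp hpq with hpow | hsub
    · have hk : n.factorization q - 1 ≠ 0 := fun hk ↦
        hp.not_dvd_one (by rwa [hk, pow_zero] at hpow)
      obtain rfl : p = q :=
        (prime_dvd_prime_iff_eq hp (prime_of_mem_primeFactors hq)).mp (hp.dvd_of_dvd_pow hpow)
      exact Or.inl ((hp.pow_dvd_iff_le_factorization hn).mpr (by omega))
    · exact Or.inr ⟨q, hq, hsub⟩
  · rintro (hsq | ⟨q, hq, hpq⟩)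
    · refine dvd_trans ?_ (totient_dvd_of_dvd hsq)
      rw [totient_prime_pow hp two_pos]
      exact dvd_mul_of_dvd_left (by simp) _
    · rw [← totient_prime (prime_of_mem_primeFactors hq)] at hpq
      exact hpq.trans (totient_dvd_of_dvd (dvd_of_mem_primeFactors hq))

theorem squarefree_of_coprime_totient {n : ℕ} (h : n.Coprime (φ n)) : Squarefree n := by
  have hn : n ≠ 0 := by rintro rfl; simp at h
  refine squarefree_iff_prime_squarefree.mpr fun p hp hpp ↦ hp.not_dvd_one ?_
  rw [← h.gcd_eq_one]
  exact dvd_gcd (dvd_of_mul_left_dvd hpp) ((hp.dvd_totient_iff hn).mpr (Or.inl (by rwa [sq])))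

theorem ne_of_dvd_sub_one {p q : ℕ} (hq : 1 < q) (h : p ∣ q - 1) : p ≠ q := by
  rintro rfl
  exact not_dvd_of_pos_of_lt (by omega) (by omega) h

theorem coprime_totient_iff {n : ℕ} (hn : n ≠ 0) :
    n.Coprime (φ n) ↔ (∀ p ∈ n.primeFactors, n.factorization p = 1) ∧
      (∀ p ∈ n.primeFactors, ∀ q ∈ n.primeFactors, p ≠ q → ¬ p ∣ q - 1) := by
  refine ⟨fun h ↦ ⟨fun p hp ↦ ?_, fun p hp q hq _ hpq ↦ ?_⟩,
    fun ⟨hsq, hsub⟩ ↦ ?_⟩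
  · exact factorization_eq_one_of_squarefree (squarefree_of_coprime_totient h)
      (prime_of_mem_primeFactors hp) (dvd_of_mem_primeFactors hp)
  · have hpφ := ((prime_of_mem_primeFactors hp).dvd_totient_iff hn).mpr (Or.inr ⟨q, hq, hpq⟩)
    exact (prime_of_mem_primeFactors hp).not_dvd_one
      (h.gcd_eq_one ▸ dvd_gcd (dvd_of_mem_primeFactors hp) hpφ)
  refine coprime_of_dvd fun p hp hpn hpφ ↦ ?_
  have hpf : p ∈ n.primeFactors := mem_primeFactors.mpr ⟨hp, hpn, hn⟩
  rcases (hp.dvd_totient_iff hn).mp hpφ with hp2 | ⟨q, hq, hpq⟩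
  · have := (hp.pow_dvd_iff_le_factorization hn).mp hp2
    rw [hsq p hpf] at this
    omega
  · exact hsub p hpf q hq (ne_of_dvd_sub_one (prime_of_mem_primeFactors hq).one_lt hpq) hpq

end Nat

theorem SemidirectProduct.eq_one_of_isMulCommutative {N G : Type*} [Group N] [Group G]
    {φ : G →* MulAut N} [IsMulCommutative (N ⋊[φ] G)] : φ = 1 := by
  ext g n
  simpa [mul_left] using congrArg left (mul_comm' (inr g : N ⋊[φ] G) (inl n))

theorem isCyclic_of_coprime_card_totient {G : Type*} [Group G] [Finite G]
    (h : (Nat.card G).Coprime (Nat.card G).totient) : IsCyclic G := by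
  have : IsZGroup G := .of_squarefree (Nat.squarefree_of_coprime_totient h)
  obtain ⟨N, H, φ, e, hH, hN, hNH⟩ := isZGroup_iff_exists_mulEquiv.mp this
  have hφ : φ = 1 := by
    ext1 g
    refine orderOf_eq_one_iff.mp (Nat.eq_one_of_dvd_coprimes h ?_ ?_)
    · exact (orderOf_map_dvd φ g).trans ((orderOf_dvd_natCard g).trans H.card_subgroup_dvd_card)
    · refine (orderOf_dvd_natCard (φ g)).trans ?_
      rw [IsCyclic.card_mulAut]
      exact Nat.totient_dvd_of_dvd N.card_subgroup_dvd_card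
  subst hφ
  have : IsCyclic (N × H) := Group.isCyclic_prod_iff.mpr ⟨hN, hH, hNH⟩
  exact isCyclic_of_surjective _ (e.trans SemidirectProduct.mulEquivProd).symm.surjective

def IsCyclicNumber (n : ℕ) : Prop :=
  ∀ (G : Type) [Group G] [Finite G], Nat.card G = n → IsCyclic G

theorem isCyclicNumber_of_coprime_totient {n : ℕ} (h : n.Coprime n.totient) :
    IsCyclicNumber n :=
  fun _ _ _ hG ↦ isCyclic_of_coprime_card_totient (hG ▸ h)

theorem IsCyclicNumber.of_dvd {n d : ℕ} (h : IsCyclicNumber n) (hn : n ≠ 0) (hd : d ∣ n) :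
    IsCyclicNumber d := by
  intro G _ _ hG
  obtain ⟨k, rfl⟩ := hd
  have : NeZero k := ⟨right_ne_zero_of_mul hn⟩
  have := h (G × Multiplicative (ZMod k)) (by simp [Nat.card_prod, hG])
  exact isCyclic_left_of_prod G (Multiplicative (ZMod k))

theorem not_isCyclicNumber_sq {p : ℕ} (hp : p.Prime) : ¬ IsCyclicNumber (p ^ 2) := by
  intro h
  have : NeZero p := ⟨hp.ne_zero⟩
  have := h (Multiplicative (ZMod p) × Multiplicative (ZMod p)) (by simp [sq])
  have hcop := coprime_card_of_isCyclic_prod (Multiplicative (ZMod p)) (Multiplicative (ZMod p))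
  simp only [Nat.card_eq_fintype_card, Fintype.card_multiplicative, ZMod.card,
    Nat.coprime_self] at hcop
  exact hp.ne_one hcop

theorem not_isCyclicNumber_mul {p q : ℕ} (hp : p.Prime) (hq : q.Prime) (hpq : p ∣ q - 1) :
    ¬ IsCyclicNumber (q * p) := by
  intro h
  have : Fact p.Prime := ⟨hp⟩
  have : NeZero q := ⟨hq.ne_zero⟩
  let C := Multiplicative (ZMod q)
  have hcardC : Nat.card C = q := by
    rw [Nat.card_eq_fintype_card, Fintype.card_multiplicative, ZMod.card]
  obtain ⟨H, hH⟩ := Sylow.exists_subgroup_card_pow_prime (G := MulAut C) p (n := 1) (by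
    rwa [pow_one, IsCyclic.card_mulAut, hcardC, Nat.totient_prime hq])
  have : Finite (C ⋊[H.subtype] H) := Finite.of_equiv _ SemidirectProduct.equivProd.symm
  have : IsCyclic (C ⋊[H.subtype] H) := h _ (by rw [SemidirectProduct.card, hH, pow_one, hcardC])
  have hφ : H.subtype = 1 := SemidirectProduct.eq_one_of_isMulCommutative
  have hbot : H = ⊥ := (Subgroup.eq_bot_iff_forall H).mpr fun x hx ↦ by
    simpa using DFunLike.congr_fun hφ ⟨x, hx⟩
  rw [hbot, Subgroup.card_bot, pow_one] at hH
  exact hp.ne_one hH.symm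

theorem IsCyclicNumber.coprime_totient {n : ℕ} (h : IsCyclicNumber n) (hn : n ≠ 0) :
    n.Coprime n.totient := by
  refine Nat.coprime_of_dvd fun p hp hpn hpφ ↦ ?_
  rcases (hp.dvd_totient_iff hn).mp hpφ with hp2 | ⟨q, hq, hpq⟩
  · exact not_isCyclicNumber_sq hp (h.of_dvd hn hp2)
  · have hq' := Nat.prime_of_mem_primeFactors hq
    have hcop : q.Coprime p :=
      (Nat.coprime_primes hq' hp).mpr (Nat.ne_of_dvd_sub_one hq'.one_lt hpq).symm
    exact not_isCyclicNumber_mul hp hq' hpq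
      (h.of_dvd hn (hcop.mul_dvd_of_dvd_of_dvd (Nat.dvd_of_mem_primeFactors hq) hpn))

theorem isCyclicNumber_iff_coprime_totient {n : ℕ} (hn : n ≠ 0) :
    IsCyclicNumber n ↔ n.Coprime n.totient :=
  ⟨fun h ↦ h.coprime_totient hn, isCyclicNumber_of_coprime_totient⟩

theorem isOneGenerator_of_isAddCyclic (A : Type*) [SkewBrace A] [IsAddCyclic A] :
    IsOneGenerator A := by
  obtain ⟨g, hg⟩ := IsAddCyclic.exists_generator (α := A)
  refine ⟨g, fun S ⟨hzero, hadd, hneg, _⟩ hgS ↦ Set.eq_univ_of_forall fun x ↦ ?_⟩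
  let S' : AddSubgroup A :=
    { carrier := S, zero_mem' := hzero, add_mem' := fun ha hb ↦ hadd _ ha _ hb,
      neg_mem' := fun ha ↦ hneg _ ha }
  obtain ⟨k, rfl⟩ := hg x
  exact S'.zsmul_mem (show g ∈ S' from hgS) k

def TrivialSkewBrace (G : Type*) := G

instance (G : Type*) [Group G] : SkewBrace (TrivialSkewBrace G) where
  toAddGroup := inferInstanceAs (AddGroup (Additive G))
  toGroup := inferInstanceAs (Group G)
  skew_left_distrib := fun (a b c : G) ↦ show a * (b * c) = a * b / a * (a * c) by
    rw [← mul_assoc (a * b / a), div_mul_cancel, mul_assoc]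

theorem isCyclic_of_isOneGenerator_trivialSkewBrace {G : Type*} [Group G]
    (h : IsOneGenerator (TrivialSkewBrace G)) : IsCyclic G := by
  obtain ⟨a, ha⟩ := h
  let Z := Subgroup.zpowers (G := G) a
  have hZ : IsSubSkewBrace (A := TrivialSkewBrace G) (Z : Set G) :=
    ⟨Z.one_mem, fun _ hx _ hy ↦ Z.mul_mem hx hy, fun _ hx ↦ Z.inv_mem hx,
      Z.one_mem, fun _ hx _ hy ↦ Z.mul_mem hx hy, fun _ hx ↦ Z.inv_mem hx⟩
  exact ⟨a, Set.eq_univ_iff_forall.mp (ha _ hZ (Subgroup.mem_zpowers _))⟩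

theorem forall_isOneGenerator_iff_isCyclicNumber (n : ℕ) :
    (∀ (A : Type) [Fintype A] [SkewBrace A], Fintype.card A = n → IsOneGenerator A) ↔
      IsCyclicNumber n := by
  refine ⟨fun h G _ _ hG ↦ ?_, fun h A _ _ hA ↦ ?_⟩
  · have : Fintype (TrivialSkewBrace G) := Fintype.ofFinite G
    exact isCyclic_of_isOneGenerator_trivialSkewBrace (h _ (Fintype.card_eq_nat_card.trans hG))
  · have : IsCyclic (Multiplicative A) :=
      h _ (by rw [← hA, Nat.card_eq_fintype_card, Fintype.card_multiplicative])
    have : IsAddCyclic A := isCyclic_multiplicative_iff.mp this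
    exact isOneGenerator_of_isAddCyclic A

/-- Every skew brace of order `n` is one-generator if and only if `n` is
square-free and `p ∤ q - 1` for all distinct primes `p, q` dividing `n`. -/
theorem every_skewBrace_is_one_generator_iff (n : ℕ) (hn : 0 < n) :
    (∀ (A : Type) [Fintype A] [SkewBrace A], Fintype.card A = n →
      IsOneGenerator A) ↔
    ((∀ p ∈ n.primeFactors, n.factorization p = 1) ∧
      (∀ p ∈ n.primeFactors, ∀ q ∈ n.primeFactors, p ≠ q → ¬ p ∣ q - 1)) := by
  rw [forall_isOneGenerator_iff_isCyclicNumber, isCyclicNumber_iff_coprime_totient hn.ne',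
    Nat.coprime_totient_iff hn.ne']
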